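/- Let H₀, H₁ be Hilbert spaces, m, A bounded self-adjoint on H₀ with m ≥ δ > 0, Ω₁ bounded self-adjoint on H₁, Γ : H₁ → H₀ bounded. For ζ with Im ζ > 0, both ζ − Ω₁ and ζm − A − Γ(ζ − Ω₁)^{-1}Γ† are invertible, and the admittance of the block system equals 𝔄(ζ) = i (ζ m − A − Γ (ζ I_{H₁} − Ω₁)^{-1} Γ†)^{-1}, i.e. T(ζM − 𝒜)^{-1}T† = (ζ m − A − Γ (ζ − Ω₁)^{-1} Γ†)^{-1} where M = m ⊕ I, 𝒜 = [[A,Γ],[Γ†,Ω₁]], and T is the projection of H₀ ⊕ H₁ onto the first component. -/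

import Mathlib

open ContinuousLinearMap
open scoped InnerProductSpace

/-- The block operator `[[A, B],[C, D]]` on the Hilbert direct sum `H₀ ⊕ H₁`. -/
noncomputable def blockOp {H₀ H₁ : Type*}
    [NormedAddCommGroup H₀] [InnerProductSpace ℂ H₀]
    [NormedAddCommGroup H₁] [InnerProductSpace ℂ H₁]
    (A : H₀ →L[ℂ] H₀) (B : H₁ →L[ℂ] H₀) (C : H₀ →L[ℂ] H₁) (D : H₁ →L[ℂ] H₁) :
    WithLp 2 (H₀ × H₁) →L[ℂ] WithLp 2 (H₀ × H₁) :=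
  ((WithLp.prodContinuousLinearEquiv 2 ℂ H₀ H₁).symm : H₀ × H₁ →L[ℂ] WithLp 2 (H₀ × H₁)) ∘L
    ((((A ∘L fst ℂ H₀ H₁) + (B ∘L snd ℂ H₀ H₁)).prod
        ((C ∘L fst ℂ H₀ H₁) + (D ∘L snd ℂ H₀ H₁)))) ∘L
    ((WithLp.prodContinuousLinearEquiv 2 ℂ H₀ H₁) : WithLp 2 (H₀ × H₁) →L[ℂ] H₀ × H₁)

/-- The isometric truncation `T : H₀ ⊕ H₁ → H₀`, `T(v,w) = v`. -/
noncomputable def truncFst (H₀ H₁ : Type*)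
    [NormedAddCommGroup H₀] [InnerProductSpace ℂ H₀]
    [NormedAddCommGroup H₁] [InnerProductSpace ℂ H₁] :
    WithLp 2 (H₀ × H₁) →L[ℂ] H₀ :=
  (fst ℂ H₀ H₁) ∘L
    ((WithLp.prodContinuousLinearEquiv 2 ℂ H₀ H₁) : WithLp 2 (H₀ × H₁) →L[ℂ] H₀ × H₁)

/-!
For self-adjoint `M` and `𝒜`, `Im ⟪x, (ζ M - 𝒜) x⟫ = Im ζ · Re ⟪x, M x⟫`. Hence, when `Im ζ > 0`,
the operators `ζ - Ω₁`, `ζ M - 𝒜` (with `M = m ⊕ 1 ≥ min δ 1`) and the Schur complement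
`ζ m - A - Γ (ζ - Ω₁)⁻¹ Γ†` are coercive in the imaginary part, hence invertible; for the Schur
complement the extra term contributes `Im ζ ‖(ζ - Ω₁)⁻¹ Γ† v‖² ≥ 0`.
The `(1,1)` block of `(ζ M - 𝒜)⁻¹` is read off by solving `(ζ M - 𝒜)(p, q) = (v, 0)`: the second
row gives `q = (ζ - Ω₁)⁻¹ Γ† p`, and the first row then says that the Schur complement maps `p`
to `v`.
-/

namespace ContinuousLinearMap

section Coercive

variable {E : Type*} [NormedAddCommGroup E] [InnerProductSpace ℂ E]

lemma exists_comp_eq_one_of_isUnit {T : E →L[ℂ] E} (hT : IsUnit T) :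
    ∃ R : E →L[ℂ] E, T ∘L R = 1 ∧ R ∘L T = 1 :=
  ⟨↑hT.unit⁻¹, hT.mul_val_inv, hT.val_inv_mul⟩

variable [CompleteSpace E]

lemma isUnit_of_mul_norm_sq_le_im_inner (T : E →L[ℂ] E) {c : ℝ} (hc : 0 < c)
    (h : ∀ x, c * ‖x‖ ^ 2 ≤ (⟪x, T x⟫_ℂ).im) : IsUnit T := by
  refine T.isUnit_of_forall_le_norm_inner_map (c := c.toNNReal) (by simpa using hc) fun x => ?_
  calc ‖x‖ ^ 2 * c.toNNReal = c * ‖x‖ ^ 2 := by rw [Real.coe_toNNReal _ hc.le, mul_comm]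
    _ ≤ (⟪x, T x⟫_ℂ).im := h x
    _ ≤ ‖⟪x, T x⟫_ℂ‖ := (le_abs_self _).trans (Complex.abs_im_le_norm _)
    _ = ‖⟪T x, x⟫_ℂ‖ := norm_inner_symm _ _

lemma im_inner_smul_sub_apply_self {M A : E →L[ℂ] E} (hM : IsSelfAdjoint M)
    (hA : IsSelfAdjoint A) (ζ : ℂ) (x : E) :
    (⟪x, (ζ • M - A) x⟫_ℂ).im = ζ.im * (⟪x, M x⟫_ℂ).re := by
  have hM' : (⟪x, M x⟫_ℂ).im = 0 := (isSelfAdjoint_iff_isSymmetric.mp hM).im_inner_self_apply x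
  have hA' : (⟪x, A x⟫_ℂ).im = 0 := (isSelfAdjoint_iff_isSymmetric.mp hA).im_inner_self_apply x
  simp [Complex.mul_im, hM', hA']

variable {Ω : E →L[ℂ] E} {ζ : ℂ}

lemma im_inner_smul_one_sub_apply_self (hΩ : IsSelfAdjoint Ω) (x : E) :
    (⟪x, (ζ • (1 : E →L[ℂ] E) - Ω) x⟫_ℂ).im = ζ.im * ‖x‖ ^ 2 := by
  rw [im_inner_smul_sub_apply_self (.one _) hΩ, one_apply_eq_self]
  exact congrArg (ζ.im * ·) (inner_self_eq_norm_sq (𝕜 := ℂ) x)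

lemma isUnit_smul_one_sub (hΩ : IsSelfAdjoint Ω) (hζ : 0 < ζ.im) :
    IsUnit (ζ • (1 : E →L[ℂ] E) - Ω) :=
  isUnit_of_mul_norm_sq_le_im_inner _ hζ fun x => (im_inner_smul_one_sub_apply_self hΩ x).ge

lemma im_inner_apply_self_of_comp_eq_one (hΩ : IsSelfAdjoint Ω) {R : E →L[ℂ] E}
    (hR : (ζ • (1 : E →L[ℂ] E) - Ω) ∘L R = 1) (w : E) :
    (⟪w, R w⟫_ℂ).im = -(ζ.im * ‖R w‖ ^ 2) := by
  have hw : (ζ • (1 : E →L[ℂ] E) - Ω) (R w) = w := congr($hR w)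
  rw [← inner_conj_symm, Complex.conj_im, ← im_inner_smul_one_sub_apply_self hΩ, hw]

end Coercive

section SchurComplement

variable {H₀ H₁ : Type*}
    [NormedAddCommGroup H₀] [InnerProductSpace ℂ H₀] [CompleteSpace H₀]
    [NormedAddCommGroup H₁] [InnerProductSpace ℂ H₁] [CompleteSpace H₁]

lemma mul_norm_sq_le_im_inner_schurComplement {m A : H₀ →L[ℂ] H₀} (hm : IsSelfAdjoint m)
    (hA : IsSelfAdjoint A) {δ : ℝ} (hmδ : ∀ v : H₀, δ * ‖v‖ ^ 2 ≤ (⟪v, m v⟫_ℂ).re)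
    {Ω : H₁ →L[ℂ] H₁} (hΩ : IsSelfAdjoint Ω) (Γ : H₁ →L[ℂ] H₀) {ζ : ℂ} (hζ : 0 ≤ ζ.im)
    {R₁ : H₁ →L[ℂ] H₁} (hR₁ : (ζ • (1 : H₁ →L[ℂ] H₁) - Ω) ∘L R₁ = 1) (v : H₀) :
    ζ.im * δ * ‖v‖ ^ 2 ≤ (⟪v, (ζ • m - A - Γ ∘L R₁ ∘L adjoint Γ) v⟫_ℂ).im := by
  have hsplit : ⟪v, (ζ • m - A - Γ ∘L R₁ ∘L adjoint Γ) v⟫_ℂ =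
      ⟪v, (ζ • m - A) v⟫_ℂ - ⟪adjoint Γ v, R₁ (adjoint Γ v)⟫_ℂ := by
    rw [sub_apply, inner_sub_right, comp_apply, comp_apply, adjoint_inner_left]
  rw [hsplit, Complex.sub_im, im_inner_smul_sub_apply_self hm hA,
    im_inner_apply_self_of_comp_eq_one hΩ hR₁, mul_assoc]
  nlinarith [mul_le_mul_of_nonneg_left (hmδ v) hζ]

end SchurComplement

end ContinuousLinearMap

lemma WithLp.prod_ext {α β : Type*} {x y : WithLp 2 (α × β)} (h₁ : x.fst = y.fst)
    (h₂ : x.snd = y.snd) : x = y :=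
  WithLp.ofLp_injective 2 (Prod.ext h₁ h₂)

section BlockOp

variable {H₀ H₁ : Type*}
    [NormedAddCommGroup H₀] [InnerProductSpace ℂ H₀]
    [NormedAddCommGroup H₁] [InnerProductSpace ℂ H₁]

section Apply

variable (A : H₀ →L[ℂ] H₀) (B : H₁ →L[ℂ] H₀) (C : H₀ →L[ℂ] H₁) (D : H₁ →L[ℂ] H₁)
  (x : WithLp 2 (H₀ × H₁))

@[simp]
lemma blockOp_apply_fst : (blockOp A B C D x).fst = A x.fst + B x.snd := rfl

@[simp]
lemma blockOp_apply_snd : (blockOp A B C D x).snd = C x.fst + D x.snd := rfl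

end Apply

lemma smul_blockOp_sub_blockOp (m A : H₀ →L[ℂ] H₀) (Γ : H₁ →L[ℂ] H₀) (Γ' : H₀ →L[ℂ] H₁)
    (Ω : H₁ →L[ℂ] H₁) (ζ : ℂ) :
    ζ • blockOp m 0 0 (1 : H₁ →L[ℂ] H₁) - blockOp A Γ Γ' Ω =
      blockOp (ζ • m - A) (-Γ) (-Γ') (ζ • (1 : H₁ →L[ℂ] H₁) - Ω) := by
  ext x
  refine WithLp.prod_ext ?_ ?_ <;> simp <;> abel

lemma min_mul_norm_sq_le_re_inner_blockOp {m : H₀ →L[ℂ] H₀} {δ : ℝ}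
    (hmδ : ∀ v : H₀, δ * ‖v‖ ^ 2 ≤ (⟪v, m v⟫_ℂ).re) (x : WithLp 2 (H₀ × H₁)) :
    min δ 1 * ‖x‖ ^ 2 ≤ (⟪x, blockOp m 0 0 (1 : H₁ →L[ℂ] H₁) x⟫_ℂ).re := by
  have hre : (⟪x, blockOp m 0 0 (1 : H₁ →L[ℂ] H₁) x⟫_ℂ).re =
      (⟪x.fst, m x.fst⟫_ℂ).re + ‖x.snd‖ ^ 2 := by
    simp [WithLp.prod_inner_apply, ← Complex.ofReal_pow]
  rw [hre, WithLp.prod_norm_sq_eq_of_L2]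
  nlinarith [hmδ x.fst, min_le_left δ 1, min_le_right δ 1, sq_nonneg ‖x.fst‖, sq_nonneg ‖x.snd‖]

variable [CompleteSpace H₀] [CompleteSpace H₁]

lemma adjoint_blockOp (A : H₀ →L[ℂ] H₀) (B : H₁ →L[ℂ] H₀) (C : H₀ →L[ℂ] H₁)
    (D : H₁ →L[ℂ] H₁) :
    adjoint (blockOp A B C D) = blockOp (adjoint A) (adjoint C) (adjoint B) (adjoint D) := by
  refine ((eq_adjoint_iff _ _).mpr fun x y => ?_).symm
  simp only [WithLp.prod_inner_apply, WithLp.ofLp_fst, WithLp.ofLp_snd, blockOp_apply_fst,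
    blockOp_apply_snd, inner_add_left, inner_add_right, adjoint_inner_left]
  ring

lemma isSelfAdjoint_blockOp {A : H₀ →L[ℂ] H₀} {Ω : H₁ →L[ℂ] H₁} (hA : IsSelfAdjoint A)
    (hΩ : IsSelfAdjoint Ω) (Γ : H₁ →L[ℂ] H₀) : IsSelfAdjoint (blockOp A Γ (adjoint Γ) Ω) := by
  rw [IsSelfAdjoint, star_eq_adjoint, adjoint_blockOp, adjoint_adjoint, hA.adjoint_eq,
    hΩ.adjoint_eq]

lemma adjoint_truncFst_apply (v : H₀) : adjoint (truncFst H₀ H₁) v = WithLp.toLp 2 (v, 0) := by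
  refine ext_inner_right ℂ fun y => ?_
  rw [adjoint_inner_left]
  simp [WithLp.prod_inner_apply, truncFst]

lemma truncFst_comp_comp_adjoint_eq {a : H₀ →L[ℂ] H₀} {b : H₁ →L[ℂ] H₀} {c : H₀ →L[ℂ] H₁}
    {d : H₁ →L[ℂ] H₁} {R₁ : H₁ →L[ℂ] H₁} {R₂ : H₀ →L[ℂ] H₀}
    {R : WithLp 2 (H₀ × H₁) →L[ℂ] WithLp 2 (H₀ × H₁)}
    (hR : blockOp a b c d ∘L R = 1) (hd : R₁ ∘L d = 1) (hS : R₂ ∘L (a - b ∘L R₁ ∘L c) = 1) :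
    truncFst H₀ H₁ ∘L R ∘L adjoint (truncFst H₀ H₁) = R₂ := by
  ext v
  set x := R (adjoint (truncFst H₀ H₁) v)
  have hx : blockOp a b c d x = WithLp.toLp 2 (v, 0) := by
    rw [← adjoint_truncFst_apply]; exact congr($hR _)
  have h₁ : a x.fst + b x.snd = v := congr(WithLp.fst $hx)
  have h₂ : c x.fst + d x.snd = 0 := congr(WithLp.snd $hx)
  have hsnd : x.snd = -R₁ (c x.fst) :=
    calc x.snd = R₁ (d x.snd) := congr($hd x.snd).symm
      _ = -R₁ (c x.fst) := by rw [eq_neg_of_add_eq_zero_right h₂, map_neg]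
  have hfst : (a - b ∘L R₁ ∘L c) x.fst = v := by
    rw [← h₁, hsnd, map_neg]; simp [sub_eq_add_neg]
  calc x.fst = R₂ ((a - b ∘L R₁ ∘L c) x.fst) := congr($hS x.fst).symm
    _ = R₂ v := by rw [hfst]

lemma isUnit_smul_blockOp_sub_blockOp
    {m A : H₀ →L[ℂ] H₀} (hm : IsSelfAdjoint m) (hA : IsSelfAdjoint A) {δ : ℝ} (hδ : 0 < δ)
    (hmδ : ∀ v : H₀, δ * ‖v‖ ^ 2 ≤ (⟪v, m v⟫_ℂ).re) {Ω : H₁ →L[ℂ] H₁} (hΩ : IsSelfAdjoint Ω)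
    (Γ : H₁ →L[ℂ] H₀) {ζ : ℂ} (hζ : 0 < ζ.im) :
    IsUnit (ζ • blockOp m 0 0 (1 : H₁ →L[ℂ] H₁) - blockOp A Γ (adjoint Γ) Ω) := by
  have hM : IsSelfAdjoint (blockOp m 0 0 (1 : H₁ →L[ℂ] H₁)) := by
    simpa using isSelfAdjoint_blockOp hm (.one (H₁ →L[ℂ] H₁)) (0 : H₁ →L[ℂ] H₀)
  refine isUnit_of_mul_norm_sq_le_im_inner _ (c := ζ.im * min δ 1) (by positivity) fun x => ?_
  rw [im_inner_smul_sub_apply_self hM (isSelfAdjoint_blockOp hA hΩ Γ), mul_assoc]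
  exact mul_le_mul_of_nonneg_left (min_mul_norm_sq_le_re_inner_blockOp hmδ x) hζ.le

end BlockOp

/-- For `Im ζ > 0`, `ζ − Ω₁` and the Schur complement
`ζm − A − Γ(ζ − Ω₁)⁻¹Γ†` are invertible, and the `(1,1)` block of the resolvent of the
block system satisfies `T(ζM − 𝒜)⁻¹T† = (ζm − A − Γ(ζ − Ω₁)⁻¹Γ†)⁻¹`. -/
theorem admittance_schur_complement
    {H₀ H₁ : Type*}
    [NormedAddCommGroup H₀] [InnerProductSpace ℂ H₀] [CompleteSpace H₀]
    [NormedAddCommGroup H₁] [InnerProductSpace ℂ H₁] [CompleteSpace H₁]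
    (m A : H₀ →L[ℂ] H₀) (hm : IsSelfAdjoint m) (hA : IsSelfAdjoint A)
    (δ : ℝ) (hδ : 0 < δ) (hmδ : ∀ v : H₀, δ * ‖v‖ ^ 2 ≤ (⟪v, m v⟫_ℂ).re)
    (Ω₁ : H₁ →L[ℂ] H₁) (hΩ : IsSelfAdjoint Ω₁) (Γ : H₁ →L[ℂ] H₀)
    (ζ : ℂ) (hζ : 0 < ζ.im) :
    ∃ (R₁ : H₁ →L[ℂ] H₁) (R₂ : H₀ →L[ℂ] H₀) (R : WithLp 2 (H₀ × H₁) →L[ℂ] WithLp 2 (H₀ × H₁)),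
      (ζ • (1 : H₁ →L[ℂ] H₁) - Ω₁) ∘L R₁ = 1 ∧ R₁ ∘L (ζ • (1 : H₁ →L[ℂ] H₁) - Ω₁) = 1 ∧
      (ζ • m - A - Γ ∘L R₁ ∘L adjoint Γ) ∘L R₂ = 1 ∧
      R₂ ∘L (ζ • m - A - Γ ∘L R₁ ∘L adjoint Γ) = 1 ∧
      (ζ • blockOp m 0 0 (1 : H₁ →L[ℂ] H₁) - blockOp A Γ (adjoint Γ) Ω₁) ∘L R = 1 ∧
      R ∘L (ζ • blockOp m 0 0 (1 : H₁ →L[ℂ] H₁) - blockOp A Γ (adjoint Γ) Ω₁) = 1 ∧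
      truncFst H₀ H₁ ∘L R ∘L adjoint (truncFst H₀ H₁) = R₂ := by
  obtain ⟨R₁, hR₁, hR₁'⟩ := exists_comp_eq_one_of_isUnit (isUnit_smul_one_sub hΩ hζ)
  obtain ⟨R₂, hR₂, hR₂'⟩ := exists_comp_eq_one_of_isUnit <|
    isUnit_of_mul_norm_sq_le_im_inner _ (mul_pos hζ hδ)
      (mul_norm_sq_le_im_inner_schurComplement hm hA hmδ hΩ Γ hζ.le hR₁)
  obtain ⟨R, hR, hR'⟩ :=
    exists_comp_eq_one_of_isUnit (isUnit_smul_blockOp_sub_blockOp hm hA hδ hmδ hΩ Γ hζ)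
  refine ⟨R₁, R₂, R, hR₁, hR₁', hR₂, hR₂', hR, hR', ?_⟩
  rw [smul_blockOp_sub_blockOp] at hR
  exact truncFst_comp_comp_adjoint_eq hR hR₁'
    (by simpa only [neg_comp, comp_neg, neg_neg] using hR₂')
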